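/- arXiv:2403.19567 — 2 statements merged into one kernel-verified Lean document; each statement's English description precedes it below -/
import Mathlib

section
/- Let (X,B) be a standard Borel space. For every Polish topology τ on X generating B there is a countable collection of mappings ξ_n : F*_τ(X) → X, n ∈ ℕ, defined on the Effros space of infinite τ-closed subsets of X, such that: (1) each ξ_n is Effros-measurable; (2) for each infinite closed set F, the map n ↦ ξ_n(F) is injective; (3) for each infinite closed set F, the set {ξ_n(F) : n ∈ ℕ} is a dense subset of F. -/
/-!
Kuratowski–Ryll-Nardzewski, made injective. Fix a complete metric for `τ` and a dense sequence
`d`. Starting from a ball `B(d j, 2⁻ᵐ)` that meets the closed set `F`, move at step `t` to the first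
centre `d k` whose ball of radius `2^-(m+t+1)` meets `F` inside the previous ball. The centres form
a Cauchy sequence whose limit lies in `F`, within `4 ⋅ 2⁻ᵐ` of `d j`, and each centre depends on
`F` only through countably many events `F ∩ O ≠ ∅`; over all `(j, m)` these limits form a countable
dense family of Effros-measurable selectors. As `F` is infinite and a finite set is its own
closure, the family takes infinitely many values; enumerating increasingly the indices at which a
value occurs for the first time gives the injective selection, and `Nat.count` keeps that
enumeration measurable.
-/

open MeasureTheory

noncomputable section

/-- The Effros Borel space: the set of `τ`-closed subsets of `X`. -/
def EffrosSpace {X : Type*} (τ : TopologicalSpace X) : Type _ :=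
  {F : Set X // @IsClosed X τ F}

/-- The Effros σ-algebra, generated by the sets `B_O = {F closed | F ∩ O ≠ ∅}`,
`O` open. -/
instance {X : Type*} (τ : TopologicalSpace X) : MeasurableSpace (EffrosSpace τ) :=
  MeasurableSpace.generateFrom
    {s | ∃ O : Set X, @IsOpen X τ O ∧ s = {F : EffrosSpace τ | (F.1 ∩ O).Nonempty}}

/-- The Effros space of *infinite* `τ`-closed subsets of `X`, with the induced
Effros σ-algebra. -/
def EffrosStar {X : Type*} (τ : TopologicalSpace X) : Type _ :=
  {F : Set X // @IsClosed X τ F ∧ F.Infinite}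

instance {X : Type*} (τ : TopologicalSpace X) : MeasurableSpace (EffrosStar τ) :=
  MeasurableSpace.generateFrom
    {s | ∃ O : Set X, @IsOpen X τ O ∧ s = {F : EffrosStar τ | (F.1 ∩ O).Nonempty}}

/-- A set `F ⊆ X` is `τ`-discrete if every point of `F` is isolated in `F`. -/
def IsTauDiscrete {X : Type*} (τ : TopologicalSpace X) (F : Set X) : Prop :=
  ∀ x ∈ F, ∃ O : Set X, @IsOpen X τ O ∧ x ∈ O ∧ F ∩ O = {x}

open Filter Metric Set Topology TopologicalSpace

section NatValued

variable {α β : Type*} [MeasurableSpace α] [MeasurableSpace β]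

theorem Measurable.comp_nat_index {f : ℕ → α → β} (hf : ∀ i, Measurable (f i)) {g : α → ℕ}
    (hg : Measurable g) : Measurable fun a => f (g a) a :=
  (measurable_from_prod_countable_right (f := fun p : ℕ × α => f p.1 p.2) hf).comp
    (hg.prodMk measurable_id)

theorem measurable_dite_find {p : α → ℕ → Prop} [∀ a, DecidablePred (p a)]
    [∀ a, Decidable (∃ k, p a k)] (hp : ∀ k, MeasurableSet {a | p a k}) {g : α → ℕ}
    (hg : Measurable g) : Measurable fun a => if h : ∃ k, p a k then Nat.find h else g a :=
  Measurable.dite (s := {a | ∃ k, p a k})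
    (measurable_find (fun a => a.2) fun k => measurable_subtype_coe (hp k))
    (hg.comp measurable_subtype_coe) (by simpa only [ofPred_exists] using MeasurableSet.iUnion hp)

theorem measurable_nat_count {p : α → ℕ → Prop} [∀ a, DecidablePred (p a)]
    (hp : ∀ i, MeasurableSet {a | p a i}) (n : ℕ) : Measurable fun a => Nat.count (p a) n := by
  induction n with
  | zero => simp only [Nat.count_zero]; exact measurable_const
  | succ n ih =>
    simp only [Nat.count_succ]
    exact ih.add (Measurable.ite (hp n) measurable_const measurable_const)

theorem measurable_nat_nth {p : α → ℕ → Prop} (hp : ∀ i, MeasurableSet {a | p a i})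
    (hinf : ∀ a, {i | p a i}.Infinite) (n : ℕ) : Measurable fun a => Nat.nth (p a) n := by
  classical
  refine measurable_to_countable' fun i => ?_
  have hpre : (fun a => Nat.nth (p a) n) ⁻¹' {i} =
      {a | p a i} ∩ (fun a => Nat.count (p a) i) ⁻¹' {n} := by
    ext a
    simp only [mem_preimage, mem_singleton_iff, mem_inter_iff, mem_ofPred_eq]
    constructor
    · rintro rfl
      exact ⟨Nat.nth_mem_of_infinite (hinf a) n, Nat.count_nth_of_infinite (hinf a) n⟩
    · rintro ⟨hi, rfl⟩
      exact Nat.nth_count hi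
  rw [hpre]
  exact (hp i).inter (measurable_nat_count hp i (measurableSet_singleton n))

end NatValued

section DistinctEnumeration

variable {α X : Type*} (s : ℕ → α → X) (V : ℕ → α → Prop)

def IsFirstOccurrence (a : α) (i : ℕ) : Prop :=
  V i a ∧ ∀ i' < i, V i' a → s i' a ≠ s i a

def enumDistinct (a : α) (n : ℕ) : X :=
  s (Nat.nth (IsFirstOccurrence s V a) n) a

variable {s V} {a : α}

theorem exists_isFirstOccurrence {i : ℕ} (hi : V i a) :
    ∃ i', IsFirstOccurrence s V a i' ∧ s i' a = s i a := by
  classical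
  have h : ∃ i', V i' a ∧ s i' a = s i a := ⟨i, hi, rfl⟩
  obtain ⟨hV, hs⟩ := Nat.find_spec h
  exact ⟨Nat.find h, ⟨hV, fun i' hi' hV' heq => Nat.find_min h hi' ⟨hV', heq.trans hs⟩⟩, hs⟩

variable (h : ((fun i => s i a) '' {i | V i a}).Infinite)
include h

theorem infinite_isFirstOccurrence : {i | IsFirstOccurrence s V a i}.Infinite := by
  refine Infinite.of_image (fun i => s i a) (h.mono ?_)
  rintro _ ⟨i, hi, rfl⟩
  obtain ⟨i', hi', heq⟩ := exists_isFirstOccurrence hi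
  exact ⟨i', hi', heq⟩

theorem injective_enumDistinct : Function.Injective (enumDistinct s V a) := by
  have hinf := infinite_isFirstOccurrence h
  refine .of_lt_imp_ne fun n n' hlt => ?_
  exact (Nat.nth_mem_of_infinite hinf n').2 _ (Nat.nth_strictMono hinf hlt)
    (Nat.nth_mem_of_infinite hinf n).1

theorem range_enumDistinct : range (enumDistinct s V a) = (fun i => s i a) '' {i | V i a} := by
  classical
  have hinf := infinite_isFirstOccurrence h
  refine Subset.antisymm ?_ ?_
  · rintro _ ⟨n, rfl⟩
    exact ⟨_, (Nat.nth_mem_of_infinite hinf n).1, rfl⟩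
  · rintro _ ⟨i, hi, rfl⟩
    obtain ⟨i', hi', heq⟩ := exists_isFirstOccurrence hi
    exact ⟨Nat.count (IsFirstOccurrence s V a) i', by rw [enumDistinct, Nat.nth_count hi', heq]⟩

omit h

theorem measurable_enumDistinct [MeasurableSpace α] [MeasurableSpace X] [MeasurableEq X]
    (hs : ∀ i, Measurable (s i)) (hV : ∀ i, MeasurableSet {a | V i a})
    (h : ∀ a, ((fun i => s i a) '' {i | V i a}).Infinite) (n : ℕ) :
    Measurable fun a => enumDistinct s V a n := by
  have hfirst (i : ℕ) : MeasurableSet {a | IsFirstOccurrence s V a i} := by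
    refine (hV i).inter (measurableSet_setOfPred.2 ?_)
    have hV' := fun i' => measurableSet_setOfPred.1 (hV i')
    have hs' := fun i' => (hs i').eq (hs i)
    fun_prop
  exact Measurable.comp_nat_index hs
    (measurable_nat_nth hfirst (fun a => infinite_isFirstOccurrence (h a)) n)

end DistinctEnumeration

section ChainSelection

variable {X : Type*} [MetricSpace X] [SeparableSpace X] [Nonempty X]

-- Staying at `j` when no centre qualifies keeps the chain Cauchy for every `F`, so that
-- `chainSelect` is a pointwise limit of measurable maps.
open Classical in
def nextCenterIdx (F : Set X) (n j : ℕ) : ℕ :=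
  if h : ∃ k, (F ∩ ball (denseSeq X k) ((1 / 2) ^ (n + 1)) ∩
      ball (denseSeq X j) ((1 / 2) ^ n)).Nonempty then Nat.find h else j

def centerIdx (F : Set X) (j m : ℕ) : ℕ → ℕ
  | 0 => j
  | t + 1 => nextCenterIdx F (m + t) (centerIdx F j m t)

def chainSelect (F : Set X) (j m : ℕ) : X :=
  limUnder atTop fun t => denseSeq X (centerIdx F j m t)

theorem inter_ball_nextCenterIdx_nonempty {F : Set X} {n j : ℕ}
    (h : (F ∩ ball (denseSeq X j) ((1 / 2) ^ n)).Nonempty) :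
    (F ∩ ball (denseSeq X (nextCenterIdx F n j)) ((1 / 2) ^ (n + 1)) ∩
      ball (denseSeq X j) ((1 / 2) ^ n)).Nonempty := by
  obtain ⟨y, hyF, hy⟩ := h
  obtain ⟨k, hk⟩ := (denseRange_denseSeq X).exists_dist_lt y
    (by positivity : (0 : ℝ) < (1 / 2) ^ (n + 1))
  have hex : ∃ k, (F ∩ ball (denseSeq X k) ((1 / 2) ^ (n + 1)) ∩
      ball (denseSeq X j) ((1 / 2) ^ n)).Nonempty := ⟨k, y, ⟨hyF, hk⟩, hy⟩
  classical
  rw [nextCenterIdx, dif_pos hex]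
  exact Nat.find_spec hex

theorem dist_nextCenterIdx_le (F : Set X) (n j : ℕ) :
    dist (denseSeq X j) (denseSeq X (nextCenterIdx F n j)) ≤ 2 * (1 / 2) ^ n := by
  classical
  unfold nextCenterIdx
  split_ifs with h
  · obtain ⟨y, ⟨-, hy₁⟩, hy₂⟩ := Nat.find_spec h
    calc _ ≤ dist (denseSeq X j) y + dist y (denseSeq X (Nat.find h)) := dist_triangle _ _ _
      _ ≤ (1 / 2) ^ n + (1 / 2) ^ (n + 1) := add_le_add (mem_ball'.1 hy₂).le (mem_ball.1 hy₁).le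
      _ ≤ 2 * (1 / 2) ^ n := by
        rw [pow_succ]; linarith [pow_nonneg (by norm_num : (0 : ℝ) ≤ 1 / 2) n]
  · rw [dist_self]
    positivity

theorem inter_ball_centerIdx_nonempty {F : Set X} {j m : ℕ}
    (h : (F ∩ ball (denseSeq X j) ((1 / 2) ^ m)).Nonempty) :
    ∀ t, (F ∩ ball (denseSeq X (centerIdx F j m t)) ((1 / 2) ^ (m + t))).Nonempty
  | 0 => h
  | t + 1 => (inter_ball_nextCenterIdx_nonempty (inter_ball_centerIdx_nonempty h t)).mono
      inter_subset_left

theorem dist_centerIdx_succ_le (F : Set X) (j m t : ℕ) :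
    dist (denseSeq X (centerIdx F j m t)) (denseSeq X (centerIdx F j m (t + 1))) ≤
      2 * (1 / 2) ^ m * (1 / 2) ^ t := by
  rw [mul_assoc, ← pow_add]
  exact dist_nextCenterIdx_le F (m + t) _

variable [CompleteSpace X]

theorem tendsto_chainSelect (F : Set X) (j m : ℕ) :
    Tendsto (fun t => denseSeq X (centerIdx F j m t)) atTop (𝓝 (chainSelect F j m)) :=
  (cauchySeq_of_le_geometric _ _ (by norm_num) (dist_centerIdx_succ_le F j m)).tendsto_limUnder

theorem dist_chainSelect_le (F : Set X) (j m : ℕ) :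
    dist (denseSeq X j) (chainSelect F j m) ≤ 4 * (1 / 2) ^ m := by
  have := dist_le_of_le_geometric_of_tendsto₀ _ _ (by norm_num) (dist_centerIdx_succ_le F j m)
    (tendsto_chainSelect F j m)
  rwa [show (2 : ℝ) * (1 / 2) ^ m / (1 - 1 / 2) = 4 * (1 / 2) ^ m by ring] at this

theorem chainSelect_mem {F : Set X} (hF : IsClosed F) {j m : ℕ}
    (h : (F ∩ ball (denseSeq X j) ((1 / 2) ^ m)).Nonempty) : chainSelect F j m ∈ F := by
  choose y hyF hy using inter_ball_centerIdx_nonempty h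
  have hr : Tendsto (fun t => (1 / 2 : ℝ) ^ (m + t)) atTop (𝓝 0) := by
    simpa only [pow_add, mul_zero] using
      (tendsto_pow_atTop_nhds_zero_of_lt_one (by norm_num : (0 : ℝ) ≤ 1 / 2)
        (by norm_num)).const_mul ((1 / 2 : ℝ) ^ m)
  refine hF.mem_of_tendsto ((tendsto_chainSelect F j m).congr_dist ?_) (.of_forall hyF)
  exact squeeze_zero (fun _ => dist_nonneg) (fun t => (mem_ball'.1 (hy t)).le) hr

theorem subset_closure_image_chainSelect (F : Set X) :
    F ⊆ closure ((fun i : ℕ => chainSelect F i.unpair.1 i.unpair.2) ''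
      {i : ℕ | (F ∩ ball (denseSeq X i.unpair.1) ((1 / 2) ^ i.unpair.2)).Nonempty}) := by
  intro x hx
  refine Metric.mem_closure_iff.2 fun ε hε => ?_
  obtain ⟨m, hm⟩ :=
    exists_pow_lt_of_lt_one (by positivity : 0 < ε / 5) (by norm_num : (1 / 2 : ℝ) < 1)
  obtain ⟨j, hj⟩ := (denseRange_denseSeq X).exists_dist_lt x (by positivity : (0 : ℝ) < (1 / 2) ^ m)
  refine ⟨_, ⟨Nat.pair j m, ?_, rfl⟩, ?_⟩
  · rw [mem_ofPred_eq, Nat.unpair_pair]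
    exact ⟨x, hx, hj⟩
  · simp only [Nat.unpair_pair]
    calc dist x (chainSelect F j m)
        ≤ dist x (denseSeq X j) + dist (denseSeq X j) (chainSelect F j m) := dist_triangle _ _ _
      _ < (1 / 2) ^ m + 4 * (1 / 2) ^ m := add_lt_add_of_lt_of_le hj (dist_chainSelect_le F j m)
      _ < ε := by linarith

end ChainSelection

def EffrosMeasurable {α X : Type*} [MeasurableSpace α] [TopologicalSpace X] (S : α → Set X) :
    Prop :=
  ∀ O : Set X, IsOpen O → MeasurableSet {a | (S a ∩ O).Nonempty}

section MeasurableChainSelection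

variable {α X : Type*} [MeasurableSpace α] [MetricSpace X] [SeparableSpace X] [Nonempty X]
  {S : α → Set X}

theorem EffrosMeasurable.measurable_nextCenterIdx (hS : EffrosMeasurable S) (n j : ℕ) :
    Measurable fun a => nextCenterIdx (S a) n j := by
  classical
  exact measurable_dite_find (fun k => by
    simpa only [inter_assoc] using hS _ (isOpen_ball.inter isOpen_ball)) measurable_const

theorem EffrosMeasurable.measurable_centerIdx (hS : EffrosMeasurable S) (j m : ℕ) :
    ∀ t, Measurable fun a => centerIdx (S a) j m t
  | 0 => measurable_const
  | t + 1 => Measurable.comp_nat_index (f := fun i a => nextCenterIdx (S a) (m + t) i)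
      (hS.measurable_nextCenterIdx (m + t)) (hS.measurable_centerIdx j m t)

theorem EffrosMeasurable.measurable_chainSelect [CompleteSpace X] [MeasurableSpace X]
    [BorelSpace X] (hS : EffrosMeasurable S) (j m : ℕ) :
    Measurable fun a => chainSelect (S a) j m :=
  measurable_of_tendsto_metrizable
    (fun t => (measurable_of_countable _).comp (hS.measurable_centerIdx j m t))
    (tendsto_pi_nhds.2 fun a => tendsto_chainSelect (S a) j m)

end MeasurableChainSelection

theorem EffrosMeasurable.exists_measurable_injective_dense_selection {α X : Type*}
    [MeasurableSpace α] [MetricSpace X] [SeparableSpace X] [CompleteSpace X] [MeasurableSpace X]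
    [BorelSpace X] {S : α → Set X} (hS : EffrosMeasurable S) (hclosed : ∀ a, IsClosed (S a))
    (hinf : ∀ a, (S a).Infinite) :
    ∃ ξ : ℕ → α → X, (∀ n, Measurable (ξ n)) ∧ (∀ a, Function.Injective fun n => ξ n a) ∧
      ∀ a, range (fun n => ξ n a) ⊆ S a ∧ S a ⊆ closure (range fun n => ξ n a) := by
  rcases isEmpty_or_nonempty X with hX | hX
  · have : IsEmpty α := ⟨fun a => (hinf a).nonempty.elim fun x _ => hX.elim x⟩
    exact ⟨fun _ => isEmptyElim, fun _ => measurable_of_subsingleton_codomain _, isEmptyElim,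
      isEmptyElim⟩
  set s : ℕ → α → X := fun i a => chainSelect (S a) i.unpair.1 i.unpair.2
  set V : ℕ → α → Prop := fun i a =>
    (S a ∩ ball (denseSeq X i.unpair.1) ((1 / 2) ^ i.unpair.2)).Nonempty
  have hsub (a : α) : (fun i => s i a) '' {i | V i a} ⊆ S a := by
    rintro _ ⟨i, hi, rfl⟩
    exact chainSelect_mem (hclosed a) hi
  have hdense (a : α) : S a ⊆ closure ((fun i => s i a) '' {i | V i a}) :=
    subset_closure_image_chainSelect (S a)
  have hvalues (a : α) : ((fun i => s i a) '' {i | V i a}).Infinite := fun hfin =>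
    hinf a (hfin.subset ((hdense a).trans hfin.isClosed.closure_subset))
  refine ⟨fun n a => enumDistinct s V a n,
    measurable_enumDistinct (fun i => hS.measurable_chainSelect _ _)
      (fun i => hS _ isOpen_ball) hvalues,
    fun a => injective_enumDistinct (hvalues a), fun a => ?_⟩
  rw [range_enumDistinct (hvalues a)]
  exact ⟨hsub a, hdense a⟩

theorem measurable_injective_selection
    {X : Type*} [MeasurableSpace X]
    (τ : TopologicalSpace X) (hτ : @PolishSpace X τ) (hB : @BorelSpace X τ _) :
    ∃ ξ : ℕ → EffrosStar τ → X,
      -- (1) measurability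
      (∀ n : ℕ, Measurable (ξ n)) ∧
      -- (2) injectivity
      (∀ F : EffrosStar τ, Function.Injective fun n => ξ n F) ∧
      -- (3) selectivity: `{ξ n F : n ∈ ℕ}` is a dense subset of `F`
      (∀ F : EffrosStar τ, Set.range (fun n => ξ n F) ⊆ F.1 ∧
        F.1 ⊆ @closure X τ (Set.range fun n => ξ n F)) := by
  let := upgradeIsCompletelyMetrizable X
  exact EffrosMeasurable.exists_measurable_injective_dense_selection
    (S := fun F : EffrosStar τ => F.1)
    (fun O hO => MeasurableSpace.measurableSet_generateFrom ⟨O, hO, rfl⟩)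
    (fun F => F.2.1) (fun F => F.2.2)

end
end

section
/- Let (X,B) be a standard Borel space. For every Polish topology τ on X generating B there are mappings Ξ_A : F*_τ(X) → ℤ_{≥0} ∪ {∞} for A ∈ B, defined on the Effros space of infinite τ-closed subsets, such that: (1) Ξ_{A∪B} = Ξ_A + Ξ_B for every disjoint A,B ∈ B; (2) each Ξ_A is Effros-measurable and together the Ξ_A generate the Effros σ-algebra of F*_τ(X); (3) the identity Ξ_A(F) = #(A ∩ F) holds in each of the following cases: (i) A is τ-open; (ii) A ⊂ O for some τ-open O with #(F ∩ O) < ∞; (iii) A ∈ B arbitrary and F is τ-discrete. -/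
/-!
Statement 11 (Effros random variables): for every Polish topology `τ` generating the
Borel σ-algebra of a standard Borel space `(X, B)`, there are maps
`Ξ_A : F*_τ(X) → ℕ∞`, `A ∈ B`, which are finitely additive, Effros-measurable and
generate the Effros σ-algebra, and which agree with the counting function
`F ↦ #(A ∩ F)` for `A` open, for `A` contained in an open set meeting `F` finitely,
and for arbitrary Borel `A` when `F` is `τ`-discrete.
-/

open MeasureTheory

noncomputable section

/-!
By the Kuratowski–Ryll-Nardzewski selection theorem, applied to the localisations
`F ↦ closure (F ∩ U)` over a countable basis, there are Effros-measurable maps `dₙ` such that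
`D(F) = {dₙ(F)}` is a dense subset of `F`. Put `Ξ_A(F) = #(A ∩ D(F))`: it is additive, and it is
measurable because it counts the indices `n` with `dₙ(F) ∈ A` that are first occurrences.
If `O` is open and `O ∩ D(F)` is finite, then `O ∩ D(F)` is closed, so `O \ D(F)` is an open set
missing `closure D(F) ⊇ F`; thus `O ∩ F ⊆ D(F)`. This gives `Ξ_O(F) = #(O ∩ F)` as well as the
locally finite and discrete cases. Finally `{F | F ∩ O ≠ ∅} = {Ξ_O ≠ 0}`, so the `Ξ_A` generate
the Effros σ-algebra.
-/

open Set Metric Filter Topology TopologicalSpace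

section Counting

variable {X : Type*} [t : TopologicalSpace X] [T1Space X] {D F O : Set X}

theorem IsOpen.inter_closure_subset_of_finite (hO : IsOpen O) (hfin : (O ∩ D).Finite) :
    O ∩ closure D ⊆ D :=
  hO.inter_closure.trans <| hfin.isClosed.closure_eq.subset.trans inter_subset_right

theorem IsOpen.inter_eq_of_finite_of_subset_closure (hO : IsOpen O) (hfin : (O ∩ D).Finite)
    (hDF : D ⊆ F) (hFD : F ⊆ closure D) : O ∩ D = O ∩ F :=
  (inter_subset_inter_right O hDF).antisymm fun _ hx =>
    ⟨hx.1, hO.inter_closure_subset_of_finite hfin ⟨hx.1, hFD hx.2⟩⟩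

theorem IsOpen.encard_inter_eq_of_subset_closure (hO : IsOpen O) (hDF : D ⊆ F)
    (hFD : F ⊆ closure D) : (O ∩ D).encard = (O ∩ F).encard := by
  by_cases hfin : (O ∩ D).Finite
  · rw [hO.inter_eq_of_finite_of_subset_closure hfin hDF hFD]
  · rw [Infinite.encard_eq hfin,
      Infinite.encard_eq (Infinite.mono (inter_subset_inter_right O hDF) hfin)]

theorem eq_of_subset_closure_of_isTauDiscrete (hDF : D ⊆ F) (hFD : F ⊆ closure D)
    (hF : IsTauDiscrete t F) : D = F := by
  refine hDF.antisymm fun x hx => ?_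
  obtain ⟨U, hU, hxU, hFU⟩ := hF x hx
  have hfin : (U ∩ D).Finite :=
    (finite_singleton x).subset (hFU ▸ inter_comm F U ▸ inter_subset_inter_right U hDF)
  exact hU.inter_closure_subset_of_finite hfin ⟨hxU, hFD hx⟩

end Counting

section MeasurableCount

variable {α β : Type*}

theorem encard_inter_range_eq (f : ℕ → β) (A : Set β) :
    (A ∩ range f).encard = {n | f n ∈ A ∧ ∀ i < n, f i ≠ f n}.encard := by
  classical
  have hinj : InjOn f {n | f n ∈ A ∧ ∀ i < n, f i ≠ f n} := by
    intro m hm n hn hmn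
    rcases lt_trichotomy m n with h | h | h
    exacts [absurd hmn (hn.2 m h), h, absurd hmn.symm (hm.2 n h)]
  rw [← hinj.encard_image]
  congr 1
  ext x
  constructor
  · rintro ⟨hxA, hx⟩
    refine ⟨Nat.find hx, ⟨?_, fun i hi heq => Nat.find_min hx hi ?_⟩, Nat.find_spec hx⟩
    · rwa [Nat.find_spec hx]
    · rw [heq, Nat.find_spec hx]
  · rintro ⟨n, hn, rfl⟩
    exact ⟨hn.1, n, rfl⟩

variable [MeasurableSpace α]

theorem measurable_sInf_setOf_nat {P : ℕ → α → Prop}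
    (hP : ∀ k, MeasurableSet {a | P k a}) : Measurable fun a => sInf {k | P k a} := by
  refine measurable_to_countable' fun m => ?_
  have hlevel : (fun a => sInf {k | P k a}) ⁻¹' {m} =
      {a | P m a ∧ ∀ i < m, ¬P i a} ∪ {a | m = 0 ∧ ∀ k, ¬P k a} := by
    ext a
    simp only [mem_preimage, mem_singleton_iff, mem_union, mem_ofPred_eq]
    constructor
    · rintro rfl
      rcases eq_empty_or_nonempty {k | P k a} with h | h
      · exact Or.inr ⟨by rw [h, Nat.sInf_empty], fun k hk => h.subset hk⟩
      · exact Or.inl ⟨Nat.sInf_mem h, fun i hi => Nat.notMem_of_lt_sInf hi⟩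
    · rintro (⟨hm, hmin⟩ | ⟨rfl, hnone⟩)
      · exact (Nat.sInf_le hm).antisymm <|
          not_lt.1 fun hlt => hmin _ hlt (Nat.sInf_mem (s := {k | P k a}) ⟨m, hm⟩)
      · simp [hnone]
  rw [hlevel]
  have hP' k := measurableSet_setOfPred.1 (hP k)
  exact (measurableSet_setOfPred.2 (by fun_prop)).union
    (measurableSet_setOfPred.2 (by fun_prop))

variable [MeasurableSpace β] [MeasurableEq β]

theorem measurable_encard_inter_range {d : ℕ → α → β} (hd : ∀ n, Measurable (d n)) {A : Set β}
    (hA : MeasurableSet A) : Measurable fun a => (A ∩ range fun n => d n a).encard := by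
  simp_rw [encard_inter_range_eq]
  refine measurable_encard.comp <| measurable_set_iff.2 fun n => ?_
  have : Measurable fun a => d n a ∈ A := measurableSet_setOfPred.1 (hd n hA)
  fun_prop

end MeasurableCount

section WeaklyMeasurable

variable {α X : Type*} [MeasurableSpace α] [TopologicalSpace X]

def IsWeaklyMeasurable (T : α → Set X) : Prop :=
  ∀ O : Set X, IsOpen O → MeasurableSet {a | (T a ∩ O).Nonempty}

variable {T S : α → Set X}

theorem IsWeaklyMeasurable.inter_isOpen (hT : IsWeaklyMeasurable T) {U : Set X} (hU : IsOpen U) :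
    IsWeaklyMeasurable fun a => T a ∩ U := fun O hO => by
  simpa only [inter_assoc] using hT _ (hU.inter hO)

theorem IsWeaklyMeasurable.closure (hT : IsWeaklyMeasurable T) :
    IsWeaklyMeasurable fun a => closure (T a) := fun O hO => by
  simpa only [closure_inter_open_nonempty_iff hO] using hT O hO

theorem IsWeaklyMeasurable.ite {p : α → Prop} [DecidablePred p] (hp : MeasurableSet {a | p a})
    (hT : IsWeaklyMeasurable T) (hS : IsWeaklyMeasurable S) :
    IsWeaklyMeasurable fun a => if p a then T a else S a := fun O hO => by
  simp only [apply_ite fun s : Set X => (s ∩ O).Nonempty]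
  exact measurableSet_setOfPred.2 <|
    Measurable.ite hp (measurableSet_setOfPred.1 (hT O hO)) (measurableSet_setOfPred.1 (hS O hO))

theorem IsWeaklyMeasurable.inter_comp_nat {U : ℕ → Set X} (hT : IsWeaklyMeasurable T)
    (hU : ∀ p, IsOpen (U p)) {r : α → ℕ} (hr : Measurable r) :
    IsWeaklyMeasurable fun a => T a ∩ U (r a) := fun O hO => by
  have hjoint : Measurable fun x : α × ℕ => (T x.1 ∩ U x.2 ∩ O).Nonempty :=
    measurable_from_prod_countable_left fun p =>
      measurableSet_setOfPred.1 (hT.inter_isOpen (hU p) O hO)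
  exact measurableSet_setOfPred.2 (hjoint.comp (measurable_id.prodMk hr))

end WeaklyMeasurable

section Selection

variable {X : Type*} [PseudoMetricSpace X] (q : ℕ → X)

def firstNearIdx (S : Set X) (δ : ℝ) : ℕ :=
  sInf {k | (S ∩ ball (q k) δ).Nonempty}

def approxIdx (S : Set X) : ℕ → ℕ
  | 0 => firstNearIdx q S 1
  | j + 1 => firstNearIdx q (S ∩ ball (q (approxIdx S j)) ((1 / 2) ^ j)) ((1 / 2) ^ (j + 1))

variable {q} {S : Set X}

theorem nonempty_inter_ball_firstNearIdx (hq : DenseRange q) (hS : S.Nonempty) {δ : ℝ}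
    (hδ : 0 < δ) : (S ∩ ball (q (firstNearIdx q S δ)) δ).Nonempty := by
  obtain ⟨x, hx⟩ := hS
  obtain ⟨k, hk⟩ := hq.exists_dist_lt x hδ
  exact Nat.sInf_mem (s := {k | (S ∩ ball (q k) δ).Nonempty}) ⟨k, x, hx, hk⟩

theorem nonempty_inter_ball_approxIdx (hq : DenseRange q) (hS : S.Nonempty) :
    ∀ j, (S ∩ ball (q (approxIdx q S j)) ((1 / 2) ^ j)).Nonempty
  | 0 => by
    simpa only [approxIdx, pow_zero] using nonempty_inter_ball_firstNearIdx hq hS one_pos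
  | j + 1 => (nonempty_inter_ball_firstNearIdx hq (nonempty_inter_ball_approxIdx hq hS j)
      (by positivity)).mono (inter_subset_inter_left _ inter_subset_left)

theorem dist_approxIdx_succ_le (hq : DenseRange q) (hS : S.Nonempty) (j : ℕ) :
    dist (q (approxIdx q S j)) (q (approxIdx q S (j + 1))) ≤ 2 * (1 / 2) ^ j := by
  have hball : (ball (q (approxIdx q S j)) ((1 / 2) ^ j) ∩
      ball (q (approxIdx q S (j + 1))) ((1 / 2) ^ (j + 1))).Nonempty :=
    (nonempty_inter_ball_firstNearIdx hq (nonempty_inter_ball_approxIdx hq hS j)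
      (pow_pos one_half_pos (j + 1))).mono (inter_subset_inter_left _ inter_subset_right)
  calc _ ≤ (1 / 2 : ℝ) ^ j + (1 / 2) ^ (j + 1) :=
        (dist_lt_add_of_nonempty_ball_inter_ball hball).le
    _ ≤ 2 * (1 / 2) ^ j := by rw [pow_succ]; linarith [pow_pos (one_half_pos (α := ℝ)) j]

theorem cauchySeq_approxIdx (hq : DenseRange q) (hS : S.Nonempty) :
    CauchySeq fun j => q (approxIdx q S j) :=
  cauchySeq_of_le_geometric _ _ one_half_lt_one (dist_approxIdx_succ_le hq hS)

theorem mem_of_tendsto_approxIdx (hq : DenseRange q) (hS : S.Nonempty) (hSc : IsClosed S)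
    {x : X} (hx : Tendsto (fun j => q (approxIdx q S j)) atTop (𝓝 x)) : x ∈ S := by
  refine hSc.closure_subset_iff.2 subset_rfl (Metric.mem_closure_iff.2 fun ε hε => ?_)
  obtain ⟨j, hjx, hjε⟩ := ((tendsto_iff_dist_tendsto_zero.1 hx).eventually (gt_mem_nhds
    (half_pos hε))).and ((tendsto_pow_atTop_nhds_zero_of_lt_one one_half_pos.le one_half_lt_one
      ).eventually (gt_mem_nhds (half_pos hε))) |>.exists
  obtain ⟨y, hyS, hy⟩ := nonempty_inter_ball_approxIdx hq hS j
  refine ⟨y, hyS, ?_⟩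
  have := dist_triangle x (q (approxIdx q S j)) y
  rw [mem_ball, dist_comm] at hy
  linarith [dist_comm x (q (approxIdx q S j))]

variable {α : Type*} [MeasurableSpace α] {T : α → Set X}

theorem IsWeaklyMeasurable.measurable_firstNearIdx (hT : IsWeaklyMeasurable T) (δ : ℝ) :
    Measurable fun a => firstNearIdx q (T a) δ :=
  measurable_sInf_setOf_nat fun _ => hT _ isOpen_ball

theorem IsWeaklyMeasurable.measurable_approxIdx (hT : IsWeaklyMeasurable T) :
    ∀ j, Measurable fun a => approxIdx q (T a) j
  | 0 => hT.measurable_firstNearIdx 1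
  | j + 1 => (hT.inter_comp_nat (fun _ => isOpen_ball) (hT.measurable_approxIdx j)
      ).measurable_firstNearIdx _

end Selection

section Selectors

variable {α X : Type*} [MeasurableSpace α] [MeasurableSpace X] {T : α → Set X}

/-- The Kuratowski–Ryll-Nardzewski selection theorem. -/
theorem IsWeaklyMeasurable.exists_measurable_selector [MetricSpace X] [CompleteSpace X]
    [SeparableSpace X] [BorelSpace X] (hT : IsWeaklyMeasurable T) (hcl : ∀ a, IsClosed (T a))
    (hne : ∀ a, (T a).Nonempty) : ∃ f : α → X, Measurable f ∧ ∀ a, f a ∈ T a := by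
  rcases isEmpty_or_nonempty α with hα | ⟨⟨a₀⟩⟩
  · exact ⟨isEmptyElim, measurable_of_empty _, isEmptyElim⟩
  have : Nonempty X := ⟨(hne a₀).some⟩
  have hlim a := (cauchySeq_approxIdx (denseRange_denseSeq X) (hne a)).tendsto_limUnder
  refine ⟨fun a => limUnder atTop fun j => denseSeq X (approxIdx (denseSeq X) (T a) j), ?_,
    fun a => mem_of_tendsto_approxIdx (denseRange_denseSeq X) (hne a) (hcl a) (hlim a)⟩
  exact measurable_of_tendsto_metrizable
    (fun j => measurable_from_nat.comp (hT.measurable_approxIdx j)) (tendsto_pi_nhds.2 hlim)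

theorem IsWeaklyMeasurable.exists_measurable_dense_selectors [TopologicalSpace X] [PolishSpace X]
    [BorelSpace X] (hT : IsWeaklyMeasurable T) (hcl : ∀ a, IsClosed (T a))
    (hne : ∀ a, (T a).Nonempty) :
    ∃ d : ℕ → α → X, (∀ n, Measurable (d n)) ∧
      ∀ a, range (fun n => d n a) ⊆ T a ∧ T a ⊆ _root_.closure (range fun n => d n a) := by
  classical
  let := upgradeIsCompletelyMetrizable X
  obtain ⟨U, hU⟩ :=
    ((countable_countableBasis X).insert ∅).exists_eq_range (insert_nonempty _ _)
  have hB : IsTopologicalBasis (range U) := hU ▸ (isBasis_countableBasis X).insert_empty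
  have hUo n : IsOpen (U n) := hB.isOpen ⟨n, rfl⟩
  -- selecting in `closure (T a ∩ U n)` for every basic open `U n` makes the selections dense
  have hTU n : IsWeaklyMeasurable
      fun a => if (T a ∩ U n).Nonempty then _root_.closure (T a ∩ U n) else T a :=
    (hT.inter_isOpen (hUo n)).closure.ite (hT _ (hUo n)) hT
  choose d hd_meas hd_mem using fun n => (hTU n).exists_measurable_selector
    (fun a => by split_ifs; exacts [isClosed_closure, hcl a])
    (fun a => by split_ifs with h; exacts [h.closure, hne a])
  refine ⟨d, hd_meas, fun a => ⟨range_subset_iff.2 fun n => ?_, fun x hx => ?_⟩⟩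
  · have hdn := hd_mem n a
    split_ifs at hdn
    exacts [(hcl a).closure_subset_iff.2 inter_subset_left hdn, hdn]
  · refine _root_.mem_closure_iff.2 fun O hO hxO => ?_
    obtain ⟨_, ⟨n, rfl⟩, hxU, hUO⟩ := hB.exists_closure_subset (hO.mem_nhds hxO)
    have hdn := hd_mem n a
    rw [if_pos ⟨x, hx, hxU⟩] at hdn
    exact ⟨d n a, hUO (closure_mono inter_subset_right hdn), n, rfl⟩

end Selectors

section EffrosStar

variable {X : Type*} [t : TopologicalSpace X]

theorem isWeaklyMeasurable_effrosStar_val : IsWeaklyMeasurable fun F : EffrosStar t => F.1 :=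
  fun O hO => MeasurableSpace.measurableSet_generateFrom ⟨O, hO, rfl⟩

theorem EffrosStar.iSup_comap_eq_of_encard_inter_isOpen [MeasurableSpace X]
    [OpensMeasurableSpace X] {Ξ : Set X → EffrosStar t → ℕ∞}
    (hΞ : ∀ A, MeasurableSet A → Measurable (Ξ A))
    (hopen : ∀ O, IsOpen O → ∀ F : EffrosStar t, Ξ O F = (O ∩ F.1).encard) :
    ⨆ (A : Set X) (_ : MeasurableSet A), MeasurableSpace.comap (Ξ A) inferInstance =
      (inferInstance : MeasurableSpace (EffrosStar t)) := by
  refine le_antisymm (iSup₂_le fun A hA => (hΞ A hA).comap_le)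
    (MeasurableSpace.generateFrom_le ?_)
  rintro _ ⟨O, hO, rfl⟩
  have hmeets : {F : EffrosStar t | (F.1 ∩ O).Nonempty} = Ξ O ⁻¹' {0}ᶜ := by
    ext F
    simp [hopen O hO F, inter_comm, nonempty_iff_ne_empty]
  rw [hmeets]
  exact le_iSup₂ (f := fun A (_ : MeasurableSet A) => MeasurableSpace.comap (Ξ A) inferInstance)
    O hO.measurableSet _ ⟨_, MeasurableSet.of_discrete, rfl⟩

end EffrosStar

theorem effros_random_variables
    {X : Type*} [MeasurableSpace X]
    (τ : TopologicalSpace X) (hτ : @PolishSpace X τ) (hB : @BorelSpace X τ _) :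
    ∃ Ξ : Set X → EffrosStar τ → ℕ∞,
      -- (1) finite additivity on disjoint Borel sets
      (∀ A B : Set X, MeasurableSet A → MeasurableSet B → Disjoint A B →
        Ξ (A ∪ B) = Ξ A + Ξ B) ∧
      -- (2) each `Ξ_A` is Effros-measurable, and together they generate the
      -- Effros σ-algebra of `F*_τ(X)`
      (∀ A : Set X, MeasurableSet A → Measurable (Ξ A)) ∧
      ((⨆ (A : Set X) (_ : MeasurableSet A),
          MeasurableSpace.comap (Ξ A) inferInstance) =
        (inferInstance : MeasurableSpace (EffrosStar τ))) ∧
      -- (3)(i) `Ξ_A(F) = #(A ∩ F)` for `A` open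
      (∀ O : Set X, @IsOpen X τ O → ∀ F : EffrosStar τ, Ξ O F = (O ∩ F.1).encard) ∧
      -- (3)(ii) `Ξ_A(F) = #(A ∩ F)` when `A ⊆ O` for some open `O` with `F ∩ O` finite
      (∀ (A O : Set X) (F : EffrosStar τ), MeasurableSet A → @IsOpen X τ O → A ⊆ O →
        (F.1 ∩ O).Finite → Ξ A F = (A ∩ F.1).encard) ∧
      -- (3)(iii) `Ξ_A(F) = #(A ∩ F)` for all Borel `A` when `F` is `τ`-discrete
      (∀ (A : Set X) (F : EffrosStar τ), MeasurableSet A → IsTauDiscrete τ F.1 →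
        Ξ A F = (A ∩ F.1).encard) := by
  let := τ
  obtain ⟨d, hd_meas, hd⟩ := isWeaklyMeasurable_effrosStar_val.exists_measurable_dense_selectors
    (fun F : EffrosStar τ => F.2.1) fun F => F.2.2.nonempty
  set D : EffrosStar τ → Set X := fun F => range fun n => d n F
  have hmeas A (hA : MeasurableSet A) : Measurable fun F => (A ∩ D F).encard :=
    measurable_encard_inter_range hd_meas hA
  have hopen O (hO : IsOpen O) F : (O ∩ D F).encard = (O ∩ F.1).encard :=
    hO.encard_inter_eq_of_subset_closure (hd F).1 (hd F).2
  refine ⟨fun A F => (A ∩ D F).encard, fun A B _ _ hAB => funext fun F => ?_, hmeas,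
    EffrosStar.iSup_comap_eq_of_encard_inter_isOpen hmeas hopen, hopen,
    fun A O F _ hO hAO hfin => ?_, fun A F _ hF => ?_⟩
  · show ((A ∪ B) ∩ D F).encard = (A ∩ D F).encard + (B ∩ D F).encard
    rw [union_inter_distrib_right]
    exact encard_union_eq (hAB.mono inter_subset_left inter_subset_left)
  · have hOD : O ∩ D F = O ∩ F.1 := hO.inter_eq_of_finite_of_subset_closure
      (hfin.subset (inter_comm F.1 O ▸ inter_subset_inter_right O (hd F).1)) (hd F).1 (hd F).2
    show (A ∩ D F).encard = (A ∩ F.1).encard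
    rw [← inter_eq_left.2 hAO, inter_assoc, inter_assoc, hOD]
  · show (A ∩ D F).encard = (A ∩ F.1).encard
    have hDF : D F = F.1 := eq_of_subset_closure_of_isTauDiscrete (hd F).1 (hd F).2 hF
    rw [hDF]
end
end
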